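/- The EBBE formula φ1 := ◇∀x[ ∃y□□P(x,y) ∧ □□¬P(x,x) ∧ ◇∀y( (◇P(x,y)↔□P(x,y)) ∧ ◇∀z((P(x,y)∧P(y,z))→P(x,z)) ) ] is satisfiable in an increasing domain model with infinite domain D; moreover, for every increasing domain model M and world w, if M,w ⊨ φ1 then there exists an R-successor u of w such that the local domain δ(u) is infinite. In particular, the EBBE fragment lacks the finite model property over increasing domain models. -/

import Mathlib

set_option maxHeartbeats 1000000

/-! ## Syntax of first-order modal logic (FOML)

Predicate symbols and variables are represented by natural numbers; an atom
`atom p args` applies the predicate symbol `p` to the list of variables `args`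
(the arity of `p` in this occurrence is the length of `args`). -/
inductive Formula : Type where
  | atom (p : ℕ) (args : List ℕ)
  | neg  (φ : Formula)
  | and  (φ ψ : Formula)
  | or   (φ ψ : Formula)
  | box  (φ : Formula)
  | dia  (φ : Formula)
  | ex   (x : ℕ) (φ : Formula)
  | all  (x : ℕ) (φ : Formula)
deriving DecidableEq

namespace Formula

def imp (φ ψ : Formula) : Formula := .or φ.neg ψ
def biimp (φ ψ : Formula) : Formula := .and (imp φ ψ) (imp ψ φ)
/-- a fixed tautology `⊤` -/
def top : Formula := .or (.atom 0 []) (.neg (.atom 0 []))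
/-- a fixed contradiction `⊥` -/
def bot : Formula := .and (.atom 0 []) (.neg (.atom 0 []))

end Formula

def bigAnd (l : List Formula) : Formula := l.foldr Formula.and Formula.top
def bigOr  (l : List Formula) : Formula := l.foldr Formula.or Formula.bot

/-! ## Semantics: Kripke structures with world-relative domains -/

structure Model where
  W : Type
  D : Type
  R : W → W → Prop
  dom : W → Set D
  ρ : W → ℕ → Set (List D)

/-- `M` is an increasing domain model: nonempty countable set of worlds, nonempty
countable domain, nonempty local domains that increase along the accessibility
relation, and interpretations of predicates at a world take values in the local
domain of that world. -/
def Model.Increasing (M : Model) : Prop :=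
  Nonempty M.W ∧ Nonempty M.D ∧ Countable M.W ∧ Countable M.D ∧
    (∀ w, (M.dom w).Nonempty) ∧
    (∀ w v, M.R w v → M.dom w ⊆ M.dom v) ∧
    (∀ w p l, l ∈ M.ρ w p → ∀ d ∈ l, d ∈ M.dom w)

def Model.sat (M : Model) : M.W → (ℕ → M.D) → Formula → Prop
  | w, σ, .atom p args => args.map σ ∈ M.ρ w p
  | w, σ, .neg φ => ¬ M.sat w σ φ
  | w, σ, .and φ ψ => M.sat w σ φ ∧ M.sat w σ ψ
  | w, σ, .or φ ψ => M.sat w σ φ ∨ M.sat w σ ψ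
  | w, σ, .box φ => ∀ v, M.R w v → M.sat v σ φ
  | w, σ, .dia φ => ∃ v, M.R w v ∧ M.sat v σ φ
  | w, σ, .ex x φ => ∃ d ∈ M.dom w, M.sat w (Function.update σ x d) φ
  | w, σ, .all x φ => ∀ d ∈ M.dom w, M.sat w (Function.update σ x d) φ

/-- the assignment `σ` is relevant at the world `w` -/
def Model.relevant (M : Model) (w : M.W) (σ : ℕ → M.D) : Prop := ∀ x, σ x ∈ M.dom w

/-- satisfiability over increasing domain models -/
def Satisfiable (φ : Formula) : Prop :=
  ∃ (M : Model), M.Increasing ∧ ∃ (w : M.W) (σ : ℕ → M.D), M.relevant w σ ∧ M.sat w σ φ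

/-- The `EBBE` fragment: atomic formulas, negation, conjunction (and
disjunction), `□α`, `◇α`, and the bundles `∃x□α` and `□∃xα` together with
their duals `∀x◇α` and `◇∀xα`. -/
inductive EBBE : Formula → Prop where
  | atom (p : ℕ) (args : List ℕ) : EBBE (.atom p args)
  | neg {φ : Formula} : EBBE φ → EBBE (.neg φ)
  | and {φ ψ : Formula} : EBBE φ → EBBE ψ → EBBE (.and φ ψ)
  | or {φ ψ : Formula} : EBBE φ → EBBE ψ → EBBE (.or φ ψ)
  | box {φ : Formula} : EBBE φ → EBBE (.box φ)
  | dia {φ : Formula} : EBBE φ → EBBE (.dia φ)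
  | exBox {x : ℕ} {φ : Formula} : EBBE φ → EBBE (.ex x (.box φ))
  | allDia {x : ℕ} {φ : Formula} : EBBE φ → EBBE (.all x (.dia φ))
  | boxEx {x : ℕ} {φ : Formula} : EBBE φ → EBBE (.box (.ex x φ))
  | diaAll {x : ℕ} {φ : Formula} : EBBE φ → EBBE (.dia (.all x φ))

/-- the binary predicate `P` -/
def atomP (x y : ℕ) : Formula := .atom 0 [x, y]

/-- `φ1 := ◇∀x[ ∃y□□P(x,y) ∧ □□¬P(x,x) ∧
◇∀y( (◇P(x,y) ↔ □P(x,y)) ∧ ◇∀z((P(x,y) ∧ P(y,z)) → P(x,z)) ) ]`,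
with variables `x := 0`, `y := 1`, `z := 2`. -/
def phi1 : Formula :=
  .dia (.all 0 (.and
    (.ex 1 (.box (.box (atomP 0 1))))
    (.and
      (.box (.box (.neg (atomP 0 0))))
      (.dia (.all 1 (.and
        (Formula.biimp (.dia (atomP 0 1)) (.box (atomP 0 1)))
        (.dia (.all 2 (Formula.imp (.and (atomP 0 1) (atomP 1 2)) (atomP 0 2))))))))))

/-! In a world `u` reached by the outer `◇`, the relation "`□□P(d, e)` holds at `u`" on `δ(u)`
is serial by the first conjunct. Its transitive closure is irreflexive: for fixed `d`, let `v` be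
the successor of `u` given by the third conjunct; the property "`□P(d, ·)` holds at `v`" is closed
under the relation, because transitivity of `P` holds at some successor of `v` and the clause
`◇P(d, y) ↔ □P(d, y)` lifts the resulting `◇P` back to `□P`. Hence `□P(d, d)` would hold at `v`,
against `□□¬P(d, d)`. A serial relation with irreflexive transitive closure has an injective
orbit, so `δ(u)` is infinite. Conversely, `φ1` holds in the model with one reflexive world,
domain `ℕ` and `P` interpreted as `<`. -/

open Relation

theorem Set.infinite_of_serial_of_irrefl_transGen {α : Type*} {S : Set α} {r : α → α → Prop}
    (hne : S.Nonempty) (hserial : ∀ d ∈ S, ∃ e ∈ S, r d e)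
    (hirrefl : ∀ d ∈ S, ¬ TransGen r d d) : S.Infinite := by
  choose! g hgS hg using hserial
  obtain ⟨d₀, hd₀⟩ := hne
  set orbit : ℕ → α := fun n => g^[n] d₀
  have horbit_succ (n : ℕ) : orbit (n + 1) = g (orbit n) := Function.iterate_succ_apply' g n d₀
  have horbit_mem (n : ℕ) : orbit n ∈ S := by
    induction n with
    | zero => exact hd₀
    | succ n ih => rw [horbit_succ]; exact hgS _ ih
  have horbit_step (n : ℕ) : r (orbit n) (orbit (n + 1)) := by
    rw [horbit_succ]; exact hg _ (horbit_mem n)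
  have horbit_chain (i k : ℕ) : TransGen r (orbit i) (orbit (i + k + 1)) := by
    induction k with
    | zero => exact .single (horbit_step i)
    | succ k ih => exact ih.tail (horbit_step _)
  have horbit_ne {i j : ℕ} (hij : i < j) : orbit i ≠ orbit j := fun heq => by
    obtain ⟨k, rfl⟩ := Nat.exists_eq_add_of_lt hij
    exact hirrefl _ (horbit_mem i) (heq ▸ horbit_chain i k)
  refine Set.infinite_of_injective_forall_mem (fun i j heq => ?_) horbit_mem
  by_contra hij
  rcases Nat.lt_or_gt_of_ne hij with h | h
  exacts [horbit_ne h heq, horbit_ne h heq.symm]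

namespace Model

variable {M : Model}

theorem sat_imp (w : M.W) (σ : ℕ → M.D) (φ ψ : Formula) :
    M.sat w σ (φ.imp ψ) ↔ (M.sat w σ φ → M.sat w σ ψ) := by
  simp only [Formula.imp, sat, imp_iff_not_or]

theorem sat_biimp (w : M.W) (σ : ℕ → M.D) (φ ψ : Formula) :
    M.sat w σ (φ.biimp ψ) ↔ (M.sat w σ φ ↔ M.sat w σ ψ) := by
  simp only [Formula.biimp, sat, sat_imp, iff_iff_implies_and_implies]

theorem sat_phi1_iff (w : M.W) (σ : ℕ → M.D) :
    M.sat w σ phi1 ↔ ∃ u, M.R w u ∧ ∀ d ∈ M.dom u,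
      (∃ e ∈ M.dom u, ∀ v, M.R u v → ∀ v', M.R v v' → [d, e] ∈ M.ρ v' 0) ∧
      (∀ v, M.R u v → ∀ v', M.R v v' → [d, d] ∉ M.ρ v' 0) ∧
      ∃ v, M.R u v ∧ ∀ e ∈ M.dom v,
        ((∃ v', M.R v v' ∧ [d, e] ∈ M.ρ v' 0) ↔ ∀ v', M.R v v' → [d, e] ∈ M.ρ v' 0) ∧
        ∃ v', M.R v v' ∧ ∀ f ∈ M.dom v',
          [d, e] ∈ M.ρ v' 0 → [e, f] ∈ M.ρ v' 0 → [d, f] ∈ M.ρ v' 0 := by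
  simp [sat_biimp, sat_imp, sat, phi1, atomP]

def BoxBoxP (M : Model) (u : M.W) (d e : M.D) : Prop :=
  d ∈ M.dom u ∧ e ∈ M.dom u ∧ ∀ v, M.R u v → ∀ v', M.R v v' → [d, e] ∈ M.ρ v' 0

theorem box_of_transGen_boxBoxP (hinc : ∀ w v, M.R w v → M.dom w ⊆ M.dom v) {u v : M.W}
    (huv : M.R u v) {d : M.D}
    (hv : ∀ e ∈ M.dom v,
      ((∃ v', M.R v v' ∧ [d, e] ∈ M.ρ v' 0) ↔ ∀ v', M.R v v' → [d, e] ∈ M.ρ v' 0) ∧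
      ∃ v', M.R v v' ∧ ∀ f ∈ M.dom v',
        [d, e] ∈ M.ρ v' 0 → [e, f] ∈ M.ρ v' 0 → [d, f] ∈ M.ρ v' 0)
    {e : M.D} (hde : TransGen (M.BoxBoxP u) d e) : ∀ v', M.R v v' → [d, e] ∈ M.ρ v' 0 := by
  induction hde with
  | single hde => exact hde.2.2 v huv
  | @tail b c _ hbc ih =>
    obtain ⟨-, v', hvv', htrans⟩ := hv b (hinc _ _ huv hbc.1)
    have hc : c ∈ M.dom v := hinc _ _ huv hbc.2.1
    have hdc : [d, c] ∈ M.ρ v' 0 :=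
      htrans c (hinc _ _ hvv' hc) (ih v' hvv') (hbc.2.2 v huv v' hvv')
    exact (hv c hc).1.1 ⟨v', hvv', hdc⟩

theorem exists_infinite_dom_of_sat_phi1 (hne : ∀ w, (M.dom w).Nonempty)
    (hinc : ∀ w v, M.R w v → M.dom w ⊆ M.dom v) {w : M.W} {σ : ℕ → M.D}
    (h : M.sat w σ phi1) : ∃ u, M.R w u ∧ (M.dom u).Infinite := by
  obtain ⟨u, hwu, hu⟩ := (sat_phi1_iff w σ).1 h
  refine ⟨u, hwu, Set.infinite_of_serial_of_irrefl_transGen (r := M.BoxBoxP u) (hne u)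
    (fun d hd => ?_) ?_⟩
  · obtain ⟨e, he, hde⟩ := (hu d hd).1
    exact ⟨e, he, hd, he, hde⟩
  · intro d hd hdd
    obtain ⟨-, hirrefl, v, huv, hv⟩ := hu d hd
    obtain ⟨-, v', hvv', -⟩ := hv d (hinc _ _ huv hd)
    exact hirrefl v huv v' hvv' (box_of_transGen_boxBoxP hinc huv hv hdd v' hvv')

end Model

theorem ebbe_phi1 : EBBE phi1 :=
  .diaAll <| .and (.exBox <| .box <| .atom _ _) <| .and (.box <| .box <| .neg <| .atom _ _) <|
    .diaAll <| .and
      (.and (.or (.neg <| .dia <| .atom _ _) (.box <| .atom _ _))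
        (.or (.neg <| .box <| .atom _ _) (.dia <| .atom _ _)))
      (.diaAll <| .or (.neg <| .and (.atom _ _) (.atom _ _)) (.atom _ _))

abbrev natLtModel : Model where
  W := Unit
  D := ℕ
  R _ _ := True
  dom _ := Set.univ
  ρ _ _ l := match l with
    | [m, n] => m < n
    | _ => False

theorem natLtModel_increasing : natLtModel.Increasing :=
  ⟨⟨()⟩, ⟨0⟩, inferInstance, inferInstance, fun _ => Set.univ_nonempty,
    fun _ _ _ => subset_rfl, fun _ _ _ _ _ _ => trivial⟩

theorem natLtModel_sat_phi1 : natLtModel.sat () (fun _ => 0) phi1 :=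
  (Model.sat_phi1_iff () _).2 ⟨(), trivial, fun d _ =>
    ⟨⟨d + 1, trivial, fun _ _ _ _ => d.lt_succ_self⟩, fun _ _ _ _ => d.lt_irrefl, (), trivial,
      fun _ _ => ⟨⟨fun ⟨_, _, h⟩ _ _ => h, fun h => ⟨(), trivial, h () trivial⟩⟩, (), trivial,
        fun _ _ h₁ h₂ => Nat.lt_trans h₁ h₂⟩⟩⟩

/-- The `EBBE` formula `φ1` is satisfiable in an increasing
domain model with infinite domain; moreover, in every increasing domain model,
at every world satisfying `φ1` there is a successor whose local domain is
infinite.  In particular the `EBBE` fragment lacks the finite model property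
over increasing domain models. -/
theorem ebbe_no_fmp :
    EBBE phi1 ∧
      (∃ M : Model, M.Increasing ∧ Infinite M.D ∧
        ∃ (w : M.W) (σ : ℕ → M.D), M.relevant w σ ∧ M.sat w σ phi1) ∧
      (∀ M : Model, M.Increasing →
        ∀ (w : M.W) (σ : ℕ → M.D), M.relevant w σ → M.sat w σ phi1 →
          ∃ u, M.R w u ∧ (M.dom u).Infinite) :=
  ⟨ebbe_phi1,
    ⟨natLtModel, natLtModel_increasing, inferInstanceAs (Infinite ℕ), (), fun _ => 0,
      fun _ => Set.mem_univ _, natLtModel_sat_phi1⟩,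
    fun M ⟨_, _, _, _, hne, hinc, _⟩ _ _ _ h => M.exists_infinite_dom_of_sat_phi1 hne hinc h⟩
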